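/- arXiv:1201.3212 — 2 statements merged into one kernel-verified Lean document; each statement's English description precedes it below -/
import Mathlib

section
/- Let K₁ ⊆ ℝ^{n₁} and K₂ ⊆ ℝ^{n₂} be proper cones (closed, convex, with nonempty interior, containing no line). If x₁ is in the interior of K₁ and x₂ is in the interior of K₂, then the Kronecker product x₁ ⊗ x₂ lies in the interior of the cone K₁ ⊗ K₂ := conv{y₁ ⊗ y₂ : y₁ ∈ K₁, y₂ ∈ K₂}. -/
/-!
The convex hull of the products contains `x₁ ⊗ x₂ + u ⊗ v` whenever `x₁ ± u ∈ K₁` and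
`x₂ ± v ∈ K₂`, since this is the midpoint of `(x₁ + u) ⊗ (x₂ + v)` and `(x₁ - u) ⊗ (x₂ - v)`.
With `u = t eᵢ` and `v = (c / t) eⱼ` for a small `t > 0` this puts `x₁ ⊗ x₂ + c e₍ᵢ,ⱼ₎`
in the hull for all `|c| ≤ t²`, and a convex set containing such a segment through `p`
in every coordinate direction is a neighbourhood of `p`.
-/

noncomputable section

/-- A proper cone: closed, convex, closed under nonnegative scaling, with nonempty
interior, containing no straight line (salient). -/
def IsProperCone {E : Type*} [NormedAddCommGroup E] [NormedSpace ℝ E] (K : Set E) : Prop :=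
  IsClosed K ∧ Convex ℝ K ∧ (∀ c : ℝ, 0 ≤ c → ∀ x ∈ K, c • x ∈ K) ∧
    (interior K).Nonempty ∧ ∀ x ∈ K, x ≠ 0 → -x ∉ K

/-- The Kronecker (tensor) product of two vectors. -/
def tensorVec {n₁ n₂ : ℕ} (x : Fin n₁ → ℝ) (y : Fin n₂ → ℝ) : Fin n₁ × Fin n₂ → ℝ :=
  fun p => x p.1 * y p.2

/-- The tensor product cone `K₁ ⊗ K₂`: the closed convex (conic) hull of the set of
Kronecker products of elements of `K₁` and `K₂`. -/
def tensorCone {n₁ n₂ : ℕ} (K₁ : Set (Fin n₁ → ℝ)) (K₂ : Set (Fin n₂ → ℝ)) :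
    Set (Fin n₁ × Fin n₂ → ℝ) :=
  closure (convexHull ℝ {z | ∃ x ∈ K₁, ∃ y ∈ K₂, z = tensorVec x y})

theorem Convex.mem_interior_of_add_single_mem {ι : Type*} [Fintype ι] [DecidableEq ι]
    {C : Set (ι → ℝ)} (hC : Convex ℝ C) {p : ι → ℝ} (hp : p ∈ C) {δ : ℝ} (hδ : 0 < δ)
    (h : ∀ k s, |s| ≤ δ → p + Pi.single k s ∈ C) : p ∈ interior C := by
  rcases isEmpty_or_nonempty ι with hι | hι
  · rw [Subsingleton.eq_univ_of_nonempty ⟨p, hp⟩, interior_univ]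
    trivial
  set N : ℝ := (Fintype.card ι : ℝ)
  have hN : 0 < N := Nat.cast_pos.2 Fintype.card_pos
  refine mem_interior_iff_mem_nhds.2 <| Metric.mem_nhds_iff.2
    ⟨δ / N, by positivity, fun q hq => ?_⟩
  have hbary : ∑ k, N⁻¹ • (p + Pi.single k (N * (q - p) k)) = q := by
    simp only [smul_add, Finset.sum_add_distrib, ← Pi.single_smul, smul_eq_mul,
      inv_mul_cancel_left₀ hN.ne', Finset.univ_sum_single, Finset.sum_const, Finset.card_univ]
    rw [← Nat.cast_smul_eq_nsmul ℝ, smul_smul, mul_inv_cancel₀ hN.ne', one_smul,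
      add_sub_cancel]
  rw [← hbary]
  refine hC.sum_mem (fun _ _ => by positivity) ?_ fun k _ => h k _ ?_
  · simp [N, hN.ne']
  · rw [Metric.mem_ball, dist_pi_lt_iff (by positivity)] at hq
    rw [abs_mul, abs_of_pos hN, ← le_div_iff₀' hN, Pi.sub_apply, ← Real.dist_eq]
    exact (hq k).le

theorem add_sub_single_mem_of_ball_subset {ι : Type*} [Fintype ι] [DecidableEq ι]
    {K : Set (ι → ℝ)} {x : ι → ℝ} {r : ℝ} (hK : Metric.ball x r ⊆ K) (i : ι) {s : ℝ}
    (hs : |s| < r) : x + Pi.single i s ∈ K ∧ x - Pi.single i s ∈ K := by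
  have hnorm : ‖(Pi.single i s : ι → ℝ)‖ < r := by rwa [Pi.norm_single, Real.norm_eq_abs]
  refine ⟨hK ?_, hK ?_⟩
  · rwa [Metric.mem_ball, dist_eq_norm, add_sub_cancel_left]
  · rwa [Metric.mem_ball, dist_eq_norm, sub_sub_cancel_left, norm_neg]

section Tensor

variable {n₁ n₂ : ℕ}

theorem tensorVec_single (i : Fin n₁) (j : Fin n₂) (s r : ℝ) :
    tensorVec (Pi.single i s) (Pi.single j r) = Pi.single (i, j) (s * r) := by
  ext ⟨a, b⟩
  by_cases ha : a = i <;> by_cases hb : b = j <;> simp [tensorVec, ha, hb]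

theorem midpoint_tensorVec_add_tensorVec_sub (x₁ u : Fin n₁ → ℝ) (x₂ v : Fin n₂ → ℝ) :
    (1 / 2 : ℝ) • tensorVec (x₁ + u) (x₂ + v) + (1 / 2 : ℝ) • tensorVec (x₁ - u) (x₂ - v) =
      tensorVec x₁ x₂ + tensorVec u v := by
  ext z
  simp only [tensorVec, Pi.add_apply, Pi.sub_apply, Pi.smul_apply, smul_eq_mul]
  ring

theorem tensorVec_mem_convexHull {K₁ : Set (Fin n₁ → ℝ)} {K₂ : Set (Fin n₂ → ℝ)}
    {x : Fin n₁ → ℝ} {y : Fin n₂ → ℝ} (hx : x ∈ K₁) (hy : y ∈ K₂) :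
    tensorVec x y ∈ convexHull ℝ {z | ∃ x ∈ K₁, ∃ y ∈ K₂, z = tensorVec x y} :=
  subset_convexHull ℝ _ ⟨x, hx, y, hy, rfl⟩

theorem tensorVec_add_tensorVec_mem_convexHull {K₁ : Set (Fin n₁ → ℝ)} {K₂ : Set (Fin n₂ → ℝ)}
    {x₁ u : Fin n₁ → ℝ} {x₂ v : Fin n₂ → ℝ} (h₁ : x₁ + u ∈ K₁ ∧ x₁ - u ∈ K₁)
    (h₂ : x₂ + v ∈ K₂ ∧ x₂ - v ∈ K₂) :
    tensorVec x₁ x₂ + tensorVec u v ∈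
      convexHull ℝ {z | ∃ x ∈ K₁, ∃ y ∈ K₂, z = tensorVec x y} := by
  rw [← midpoint_tensorVec_add_tensorVec_sub]
  exact convex_convexHull ℝ _ (tensorVec_mem_convexHull h₁.1 h₂.1)
    (tensorVec_mem_convexHull h₁.2 h₂.2) (by norm_num) (by norm_num) (by norm_num)

end Tensor

theorem tensorVec_mem_interior_tensorCone_general {n₁ n₂ : ℕ}
    (K₁ : Set (Fin n₁ → ℝ)) (K₂ : Set (Fin n₂ → ℝ))
    (x₁ : Fin n₁ → ℝ) (x₂ : Fin n₂ → ℝ)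
    (hx₁ : x₁ ∈ interior K₁) (hx₂ : x₂ ∈ interior K₂) :
    tensorVec x₁ x₂ ∈ interior (tensorCone K₁ K₂) := by
  obtain ⟨r₁, hr₁, hball₁⟩ := Metric.mem_nhds_iff.1 (mem_interior_iff_mem_nhds.1 hx₁)
  obtain ⟨r₂, hr₂, hball₂⟩ := Metric.mem_nhds_iff.1 (mem_interior_iff_mem_nhds.1 hx₂)
  obtain ⟨t, ht, htr⟩ := exists_between (lt_min hr₁ hr₂)
  have ht₁ : |t| < r₁ := by rw [abs_of_pos ht]; exact htr.trans_le (min_le_left r₁ r₂)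
  have ht₂ : t < r₂ := htr.trans_le (min_le_right r₁ r₂)
  refine interior_mono subset_closure <| (convex_convexHull ℝ _).mem_interior_of_add_single_mem
    (tensorVec_mem_convexHull (interior_subset hx₁) (interior_subset hx₂))
    (mul_pos ht ht) fun ⟨i, j⟩ c hc => ?_
  have hct : |c / t| < r₂ := by
    rw [abs_div, abs_of_pos ht, div_lt_iff₀ ht]
    exact hc.trans_lt (mul_lt_mul_of_pos_right ht₂ ht)
  rw [← mul_div_cancel₀ c ht.ne', ← tensorVec_single]
  exact tensorVec_add_tensorVec_mem_convexHull (add_sub_single_mem_of_ball_subset hball₁ i ht₁)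
    (add_sub_single_mem_of_ball_subset hball₂ j hct)

/-- If `x₁ ∈ int K₁` and `x₂ ∈ int K₂` for proper cones `K₁, K₂`, then
`x₁ ⊗ x₂ ∈ int (K₁ ⊗ K₂)`. -/
theorem tensorVec_mem_interior_tensorCone {n₁ n₂ : ℕ}
    (K₁ : Set (Fin n₁ → ℝ)) (K₂ : Set (Fin n₂ → ℝ))
    (hK₁ : IsProperCone K₁) (hK₂ : IsProperCone K₂)
    (x₁ : Fin n₁ → ℝ) (x₂ : Fin n₂ → ℝ)
    (hx₁ : x₁ ∈ interior K₁) (hx₂ : x₂ ∈ interior K₂) :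
    tensorVec x₁ x₂ ∈ interior (tensorCone K₁ K₂) :=
  tensorVec_mem_interior_tensorCone_general K₁ K₂ x₁ x₂ hx₁ hx₂
end
end

section
/- The joint spectral subradius is not continuous as a function of the matrix set: the sets Σ_k = {[[1,1],[0,1]], [[0,0],[-1/k,1]]} satisfy ρ̌(Σ_k) = 0 for every k ∈ ℕ (since (A₁A₀^k)² = 0), while the limit set Σ = {[[1,1],[0,1]], [[0,0],[0,1]]} satisfies ρ̌(Σ) = 1. -/
open Filter Matrix

noncomputable section

attribute [local instance] Matrix.normedAddCommGroup

/-- The set of all products of length `t` of matrices from `S`. -/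
def prodsOf {n : ℕ} (S : Set (Matrix (Fin n) (Fin n) ℝ)) (t : ℕ) :
    Set (Matrix (Fin n) (Fin n) ℝ) :=
  {P | ∃ w : Fin t → Matrix (Fin n) (Fin n) ℝ, (∀ i, w i ∈ S) ∧ P = (List.ofFn w).prod}

/-- `r` is the joint spectral subradius of `S`. -/
def IsJSSubradius {n : ℕ} (S : Set (Matrix (Fin n) (Fin n) ℝ)) (r : ℝ) : Prop :=
  Tendsto (fun t : ℕ => sInf ((fun P => ‖P‖ ^ (t : ℝ)⁻¹) '' prodsOf S t)) atTop (nhds r)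

/-!
For `Σ_k`, write `A = [[1,1],[0,1]]` and `B_k = [[0,0],[-1/k,1]]`. Since `A ^ k = [[1,k],[0,1]]`,
the product `B_k A ^ k = [[0,0],[-1/k,0]]` squares to zero, so for large `t` some product of
length `t` vanishes and the subradius is `0`. For the limit set, every generator has bottom
row `(0, 1)`; such matrices form a submonoid, so every product has bottom-right entry `1` and
norm at least `1`, and the idempotent `[[0,0],[0,1]]` attains this bound at every length.
-/

namespace Matrix

variable {n : Type*} [Fintype n] [DecidableEq n] {α : Type*} [Semiring α]

def rowSingleSubmonoid (i : n) : Submonoid (Matrix n n α) where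
  carrier := {M | M i = Pi.single i 1}
  one_mem' := by
    ext j
    simp [one_apply, Pi.single_apply, eq_comm]
  mul_mem' {M N} hM hN := by
    ext j
    simp only [Set.mem_ofPred_eq] at hM hN ⊢
    simp [mul_apply, hM, hN, Pi.single_apply]

end Matrix

section prodsOf

variable {n : ℕ} {S : Set (Matrix (Fin n) (Fin n) ℝ)}

lemma mem_prodsOf_iff {t : ℕ} {P : Matrix (Fin n) (Fin n) ℝ} :
    P ∈ prodsOf S t ↔ ∃ l : List (Matrix (Fin n) (Fin n) ℝ),
      l.length = t ∧ (∀ M ∈ l, M ∈ S) ∧ l.prod = P := by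
  constructor
  · rintro ⟨w, hw, rfl⟩
    exact ⟨List.ofFn w, List.length_ofFn, by simpa [List.mem_ofFn] using hw, rfl⟩
  · rintro ⟨l, rfl, hl, rfl⟩
    exact ⟨l.get, fun i => hl _ (l.get_mem i), by rw [List.ofFn_get]⟩

lemma mul_mem_prodsOf {a b : ℕ} {P Q : Matrix (Fin n) (Fin n) ℝ}
    (hP : P ∈ prodsOf S a) (hQ : Q ∈ prodsOf S b) : P * Q ∈ prodsOf S (a + b) := by
  obtain ⟨l, rfl, hl, rfl⟩ := mem_prodsOf_iff.mp hP
  obtain ⟨l', rfl, hl', rfl⟩ := mem_prodsOf_iff.mp hQ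
  refine mem_prodsOf_iff.mpr ⟨l ++ l', List.length_append, ?_, List.prod_append⟩
  simpa [or_imp, forall_and] using ⟨hl, hl'⟩

lemma pow_mem_prodsOf {M : Matrix (Fin n) (Fin n) ℝ} (hM : M ∈ S) (t : ℕ) :
    M ^ t ∈ prodsOf S t :=
  mem_prodsOf_iff.mpr ⟨List.replicate t M, List.length_replicate,
    fun _ h => List.eq_of_mem_replicate h ▸ hM, List.prod_replicate t M⟩

lemma isJSSubradius_of_eventually_isLeast {r : ℝ}
    (h : ∀ᶠ t : ℕ in atTop, IsLeast ((fun P => ‖P‖ ^ (t : ℝ)⁻¹) '' prodsOf S t) r) :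
    IsJSSubradius S r :=
  tendsto_const_nhds.congr' (h.mono fun _ ht => ht.csInf_eq.symm)

/-- A zero product can be padded to every larger length with copies of any `M ∈ S`. -/
lemma isJSSubradius_zero_of_zero_mem_prodsOf {m : ℕ} {M : Matrix (Fin n) (Fin n) ℝ}
    (hM : M ∈ S) (h0 : 0 ∈ prodsOf S m) : IsJSSubradius S 0 := by
  refine isJSSubradius_of_eventually_isLeast (eventually_atTop.mpr ⟨m + 1, fun (t : ℕ) ht => ?_⟩)
  have hzero : (0 : Matrix (Fin n) (Fin n) ℝ) ∈ prodsOf S t := by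
    simpa [Nat.add_sub_cancel' (by omega : m ≤ t)] using
      mul_mem_prodsOf h0 (pow_mem_prodsOf hM (t - m))
  refine ⟨⟨0, hzero, ?_⟩, ?_⟩
  · simp [Real.zero_rpow (inv_ne_zero (Nat.cast_ne_zero.mpr (by omega : t ≠ 0)))]
  · rintro _ ⟨P, -, rfl⟩
    positivity

lemma one_le_norm_of_mem_rowSingleSubmonoid {M : Matrix (Fin n) (Fin n) ℝ} {i : Fin n}
    (hM : M ∈ Matrix.rowSingleSubmonoid i) : 1 ≤ ‖M‖ := by
  have hMii : M i i = 1 := by simpa using congr_fun hM i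
  simpa [hMii] using Matrix.norm_entry_le_entrywise_sup_norm M (i := i) (j := i)

lemma isJSSubradius_one_of_subset_rowSingleSubmonoid (i : Fin n)
    (hS : ∀ M ∈ S, M ∈ Matrix.rowSingleSubmonoid i) {E : Matrix (Fin n) (Fin n) ℝ} (hE : E ∈ S)
    (hEidem : IsIdempotentElem E) (hEnorm : ‖E‖ = 1) : IsJSSubradius S 1 := by
  refine isJSSubradius_of_eventually_isLeast (eventually_atTop.mpr ⟨1, fun (t : ℕ) ht => ?_⟩)
  refine ⟨⟨E, hEidem.pow_eq (n := t) (by omega) ▸ pow_mem_prodsOf hE t, by simp [hEnorm]⟩, ?_⟩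
  rintro _ ⟨P, hP, rfl⟩
  obtain ⟨l, -, hl, rfl⟩ := mem_prodsOf_iff.mp hP
  have hrow : l.prod ∈ Matrix.rowSingleSubmonoid i :=
    Submonoid.list_prod_mem _ fun M hM => hS M (hl M hM)
  exact Real.one_le_rpow (one_le_norm_of_mem_rowSingleSubmonoid hrow) (by positivity)

end prodsOf

lemma Matrix.unitriangular_fin_two_pow {α : Type*} [CommRing α] (a : α) (k : ℕ) :
    !![1, a; 0, 1] ^ k = !![1, k * a; 0, 1] := by
  induction k with
  | zero => simp [one_fin_two]
  | succ k ih =>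
    rw [pow_succ, ih, mul_fin_two]
    push_cast
    ring_nf

/-- Discontinuity of the joint spectral subradius: the sets
`Σ_k = {[[1,1],[0,1]], [[0,0],[-1/k,1]]}` have subradius `0` for all `k ≥ 1`, while the
limit set `Σ = {[[1,1],[0,1]], [[0,0],[0,1]]}` has subradius `1`. -/
theorem subradius_not_continuous :
    (∀ k : ℕ, 1 ≤ k →
      IsJSSubradius ({!![(1:ℝ),1; 0,1], !![(0:ℝ),0; -(1/(k:ℝ)),1]} :
        Set (Matrix (Fin 2) (Fin 2) ℝ)) 0) ∧
    IsJSSubradius ({!![(1:ℝ),1; 0,1], !![(0:ℝ),0; 0,1]} :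
      Set (Matrix (Fin 2) (Fin 2) ℝ)) 1 := by
  refine ⟨fun k hk => ?_, ?_⟩
  · set A : Matrix (Fin 2) (Fin 2) ℝ := !![1, 1; 0, 1]
    set B : Matrix (Fin 2) (Fin 2) ℝ := !![0, 0; -(1 / (k : ℝ)), 1]
    have hk0 : (k : ℝ) ≠ 0 := Nat.cast_ne_zero.mpr (by omega)
    have hBAk_eq : B * A ^ k = !![0, 0; -(1 / (k : ℝ)), 0] := by
      rw [unitriangular_fin_two_pow]
      ext i j
      fin_cases i <;> fin_cases j <;> simp [B, mul_apply, Fin.sum_univ_two, hk0]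
    have hnil : B * A ^ k * (B * A ^ k) = 0 := by
      rw [hBAk_eq]
      ext i j
      fin_cases i <;> fin_cases j <;> simp [mul_apply]
    have hBAk : B * A ^ k ∈ prodsOf {A, B} (1 + k) :=
      mul_mem_prodsOf (by simpa using pow_mem_prodsOf (S := {A, B}) (by simp) 1)
        (pow_mem_prodsOf (by simp) k)
    exact isJSSubradius_zero_of_zero_mem_prodsOf (M := A) (by simp)
      (hnil ▸ mul_mem_prodsOf hBAk hBAk)
  · refine isJSSubradius_one_of_subset_rowSingleSubmonoid 1 ?_ (E := !![0, 0; 0, 1]) (by simp)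
      ?_ ?_
    · rintro M (rfl | rfl) <;> ext j <;> fin_cases j <;> simp
    · rw [IsIdempotentElem, mul_fin_two]
      simp
    · refine le_antisymm ((norm_le_iff zero_le_one).mpr fun i j => ?_) ?_
      · fin_cases i <;> fin_cases j <;> simp
      · simpa using norm_entry_le_entrywise_sup_norm (!![(0 : ℝ), 0; 0, 1]) (i := 1) (j := 1)
end
end
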